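/- Let L ≥ 2, n ≥ 1, m = n(L−1), fix k with 1 ≤ k ≤ L−1, and let {h^l_j}_{j≥0} ⊂ ℂ (0 ≤ l ≤ L−1) be sequences satisfying the contiguity relation h^1_j + h^2_j + ⋯ + h^{L−1}_j = h^0_j − h^0_{j+1} for all j ≥ 0. Set f_l(w) := Σ_{j≥0} h^l_j w^j for 1 ≤ l ≤ L−1. Define P_0(w) := det of the m×m matrix with first row (1, w, …, w^{m−1}) and remaining rows the stacked blocks A^1_m(n,m), …, A^{k−1}_m(n,m), A^k_m(n−1,m), A^{k+1}_{m−1}(n,m), …, A^{L−1}_{m−1}(n,m), and P_l(w) := [f_l·P_0]_0^{m−1} for 1 ≤ l ≤ L−1. Then h^0_0·P_0(1) − Σ_{l=1}^{L−1} P_l(1) = det of the m×m matrix with first row (h^0_m, h^0_{m−1}, …, h^0_1) and remaining rows the stacked blocks A^1_m(n,m), …, A^{k−1}_m(n,m), A^k_m(n−1,m), A^{k+1}_{m−1}(n,m), …, A^{L−1}_{m−1}(n,m). -/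

import Mathlib

noncomputable section

/-- A sequence `ℕ → ℂ` extended by `0` to negative indices. -/
def hz (h : ℕ → ℕ → ℂ) (k : ℕ) : ℤ → ℂ := fun j => if 0 ≤ j then h k j.toNat else 0

/-- Entry `(r', c)` (0-indexed) of the stacked row-blocks
`A^1_m(n,·), …, A^{j-1}_m(n,·), A^j_m(n-1,·), A^{j+1}_{m-1}(n,·), …, A^{L-1}_{m-1}(n,·)`. -/
def stackJ (n j m : ℕ) (a : ℕ → ℤ → ℂ) (r' c : ℕ) : ℂ :=
  if r' < (j - 1) * n then
    a (r' / n + 1) ((m : ℤ) + ((r' % n : ℕ) : ℤ) - (c : ℤ))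
  else if r' < j * n - 1 then
    a j ((m : ℤ) + (((r' - (j - 1) * n : ℕ)) : ℤ) - (c : ℤ))
  else
    a ((r' - (j * n - 1)) / n + j + 1)
      ((m : ℤ) - 1 + ((((r' - (j * n - 1)) % n : ℕ)) : ℤ) - (c : ℤ))

/-- `P_0^{(k)}(w)` for `1 ≤ k ≤ L-1`: the determinant of the `m × m` matrix with first
row `(1, w, …, w^{m-1})` and remaining rows the stacked blocks
`A^1_m(n,m), …, A^{k-1}_m(n,m), A^k_m(n-1,m), A^{k+1}_{m-1}(n,m), …, A^{L-1}_{m-1}(n,m)`. -/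
def P0k (L n k : ℕ) (a : ℕ → ℤ → ℂ) : Polynomial ℂ :=
  Matrix.det (Matrix.of fun r c : Fin (n * (L - 1)) =>
    if (r : ℕ) = 0 then Polynomial.X ^ (c : ℕ)
    else Polynomial.C (stackJ n k (n * (L - 1)) a ((r : ℕ) - 1) (c : ℕ)))

/-! Expanding the determinants along their first row expresses everything through the
cofactors `d c` of that row: `P₀ = ∑_{c<m} d c • X^c`, the right-hand side is
`∑_c h⁰_{m-c} d c`, and `[f_l P₀]_0^{m-1}(1) = ∑_c (∑_{a<m-c} h^l_a) d c`. Summing over `l`,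
the contiguity relation telescopes the inner sums to `h⁰_0 - h⁰_{m-c}`. -/

open Finset Polynomial

theorem Matrix.det_updateRow_eq_sum_mul_adjugate {n R : Type*} [Fintype n] [DecidableEq n]
    [CommRing R] (A : Matrix n n R) (j : n) (v : n → R) :
    (A.updateRow j v).det = ∑ c, v c * A.adjugate c j := by
  simp only [A.updateRow j v |>.det_eq_sum_mul_adjugate_row j, adjugate_apply, updateRow_self,
    updateRow_idem]

theorem Matrix.det_updateRow_map_C_X_pow {m : ℕ} {R : Type*} [CommRing R]
    (B : Matrix (Fin m) (Fin m) R) (j : Fin m) :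
    ((B.map C).updateRow j fun c => X ^ (c : ℕ)).det =
      ∑ c : Fin m, C (B.adjugate c j) * X ^ (c : ℕ) := by
  rw [det_updateRow_eq_sum_mul_adjugate, ← RingHom.mapMatrix_apply,
    ← RingHom.map_adjugate]
  exact sum_congr rfl fun c _ => mul_comm _ _

theorem Polynomial.coeff_sum_fin_C_mul_X_pow {m : ℕ} {R : Type*} [Semiring R] (d : Fin m → R)
    (c : Fin m) :
    (∑ i : Fin m, C (d i) * X ^ (i : ℕ)).coeff c = d c := by
  simp [Fin.val_inj]

theorem PowerSeries.eval_one_trunc {R : Type*} [CommSemiring R] (m : ℕ) (F : PowerSeries R) :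
    (trunc m F).eval 1 = ∑ j ∈ range m, coeff j F := by
  simp [eval, eval₂_trunc_eq_sum_range]

theorem PowerSeries.eval_one_trunc_mk_mul {R : Type*} [CommSemiring R] (m : ℕ) (f : ℕ → R)
    (P : R[X]) :
    (trunc m (mk f * (P : PowerSeries R))).eval 1 =
      ∑ i ∈ range m, (∑ a ∈ range (m - i), f a) * P.coeff i := by
  rw [eval_one_trunc, mul_comm]
  simp only [coeff_mul, Polynomial.coeff_coe, coeff_mk]
  rw [sum_congr rfl fun j _ =>
    Finset.Nat.sum_antidiagonal_eq_sum_range_succ (fun i a => P.coeff i * f a) j,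
    sum_range_diag_flip m fun i a => P.coeff i * f a]
  exact sum_congr rfl fun i _ => by rw [sum_mul]; simp only [mul_comm]

theorem Finset.sum_Ico_sum_range_eq_sub {M : Type*} [AddCommGroup M] {L : ℕ} {h : ℕ → ℕ → M}
    (hcont : ∀ j, ∑ l ∈ Ico 1 L, h l j = h 0 j - h 0 (j + 1)) (N : ℕ) :
    ∑ l ∈ Ico 1 L, ∑ a ∈ range N, h l a = h 0 0 - h 0 N := by
  rw [sum_comm]
  simp only [hcont]
  exact sum_range_sub' _ _

theorem eval_one_sub_sum_eval_one_trunc {R : Type*} [CommRing R] {L : ℕ} {h : ℕ → ℕ → R}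
    (hcont : ∀ j, ∑ l ∈ Ico 1 L, h l j = h 0 j - h 0 (j + 1)) {m : ℕ} (d : Fin m → R) :
    h 0 0 * (∑ c : Fin m, C (d c) * X ^ (c : ℕ)).eval 1 -
        ∑ l ∈ Ico 1 L, (PowerSeries.trunc m (PowerSeries.mk (h l) *
          ((∑ c : Fin m, C (d c) * X ^ (c : ℕ) : R[X]) : PowerSeries R))).eval 1 =
      ∑ c : Fin m, h 0 (m - c) * d c := by
  set P : R[X] := ∑ c : Fin m, C (d c) * X ^ (c : ℕ)
  have hP : P.eval 1 = ∑ c, d c := by simp [P, eval_finsetSum]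
  have htrunc (l : ℕ) :
      (PowerSeries.trunc m (PowerSeries.mk (h l) * (P : PowerSeries R))).eval 1 =
      ∑ c : Fin m, (∑ a ∈ range (m - c), h l a) * d c := by
    rw [PowerSeries.eval_one_trunc_mk_mul,
      ← Fin.sum_univ_eq_sum_range fun i => (∑ a ∈ range (m - i), h l a) * P.coeff i]
    simp only [P, coeff_sum_fin_C_mul_X_pow]
  simp only [hP, htrunc]
  rw [sum_comm]
  simp only [← sum_mul, sum_Ico_sum_range_eq_sub hcont, mul_sum, ← sum_sub_distrib]
  exact sum_congr rfl fun c _ => by ring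

theorem eval_one_identity_k_general (L n : ℕ) (hL : 2 ≤ L) (hn : 0 < n)
    (k : ℕ) (h : ℕ → ℕ → ℂ)
    (hcont : ∀ j : ℕ, ∑ l ∈ Finset.Ico 1 L, h l j = h 0 j - h 0 (j + 1)) :
    h 0 0 * Polynomial.eval 1 (P0k L n k (hz h)) -
        ∑ l ∈ Finset.Ico 1 L, Polynomial.eval 1
          (PowerSeries.trunc (n * (L - 1))
            ((PowerSeries.mk fun j => h l j) *
              ((P0k L n k (hz h) : Polynomial ℂ) : PowerSeries ℂ))) =
      Matrix.det (Matrix.of fun r c : Fin (n * (L - 1)) =>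
        if (r : ℕ) = 0 then hz h 0 (((n * (L - 1) : ℕ) : ℤ) - ((c : ℕ) : ℤ))
        else stackJ n k (n * (L - 1)) (hz h) ((r : ℕ) - 1) (c : ℕ)) := by
  set m := n * (L - 1)
  have hm : 0 < m := Nat.mul_pos hn (by omega)
  let i₀ : Fin m := ⟨0, hm⟩
  let B : Matrix (Fin m) (Fin m) ℂ := .of fun r c => stackJ n k m (hz h) (r - 1) c
  have hP0 : P0k L n k (hz h) = ∑ c : Fin m, C (B.adjugate c i₀) * X ^ (c : ℕ) := by
    rw [← Matrix.det_updateRow_map_C_X_pow]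
    unfold P0k
    congr 1
    ext r c : 2
    simp [Matrix.updateRow_apply, Fin.ext_iff, B, i₀, m]
  have hRHS : (Matrix.of fun r c : Fin m =>
      if (r : ℕ) = 0 then hz h 0 ((m : ℤ) - ((c : ℕ) : ℤ))
      else stackJ n k m (hz h) ((r : ℕ) - 1) (c : ℕ)) =
      B.updateRow i₀ fun c => h 0 (m - c) := by
    ext r c
    simp [Matrix.updateRow_apply, Fin.ext_iff, B, i₀, hz]
  rw [hP0, hRHS, Matrix.det_updateRow_eq_sum_mul_adjugate]
  exact eval_one_sub_sum_eval_one_trunc hcont _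

/-- Evaluation at `w = 1` of the simultaneous Padé polynomials (`k ≥ 1` case),
via the contiguity relation `h^1_j + ⋯ + h^{L-1}_j = h^0_j - h^0_{j+1}`. -/
theorem eval_one_identity_k (L n : ℕ) (hL : 2 ≤ L) (hn : 0 < n)
    (k : ℕ) (hk1 : 1 ≤ k) (hk : k < L)
    (h : ℕ → ℕ → ℂ)
    (hcont : ∀ j : ℕ, ∑ l ∈ Finset.Ico 1 L, h l j = h 0 j - h 0 (j + 1)) :
    h 0 0 * Polynomial.eval 1 (P0k L n k (hz h)) -
        ∑ l ∈ Finset.Ico 1 L, Polynomial.eval 1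
          (PowerSeries.trunc (n * (L - 1))
            ((PowerSeries.mk fun j => h l j) *
              ((P0k L n k (hz h) : Polynomial ℂ) : PowerSeries ℂ))) =
      Matrix.det (Matrix.of fun r c : Fin (n * (L - 1)) =>
        if (r : ℕ) = 0 then hz h 0 (((n * (L - 1) : ℕ) : ℤ) - ((c : ℕ) : ℤ))
        else stackJ n k (n * (L - 1)) (hz h) ((r : ℕ) - 1) (c : ℕ)) :=
  eval_one_identity_k_general L n hL hn k h hcont
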